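/- Let β > 0, δ > 0, ρ > 0, set a_c = δ/β and a† = (δ + √(δ² + ρδ))/β, and let u : ℝ → ℝ be twice continuously differentiable with u(0) = 0, u'(x) > 0 for x ∈ [0, W), u'(W) = 0, u''(x) < 0 for x ∈ [0, W], and W > a†. Let a^CE ∈ (a_c, W) be the unique solution of u(a)/u'(a) − a = (ρ + δ)/(β − δ/a), define the equilibrium efficiency E^CE = (δ/(β·a^CE))·u(a^CE), the social optimum E^OPT = u(a_c), the price of anarchy PoA = E^OPT/E^CE, and κ = (a†·u(a_c))/(a_c·u(a†)). Then: (i) if u'(a†) < u(a†)/(2a† + ρ/β), then a^CE < a† and PoA < κ; (ii) if u'(a†) > u(a†)/(2a† + ρ/β), then a^CE > a† and PoA > κ; (iii) if u'(a†) = u(a†)/(2a† + ρ/β), then a^CE = a† and PoA = κ. -/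

import Mathlib

/-!
The equilibrium condition says that `G(a) = u a / u' a - a - (ρ + δ) / (β - δ / a)` vanishes.
On `(a_c, W)` the map `G` is strictly increasing: `(u / u' - id)' = -u u'' / u'² > 0`, and the
last term decreases in `a`. At `a†` that term equals `a† + ρ / β`, so the sign of
`G(a†) = u(a†) / u'(a†) - (2 a† + ρ / β)` decides on which side of `a†` the equilibrium lies.
The price of anarchy at a common degree `a` is `(a / u a) · (u a_c / a_c)`, and `κ` is the same
expression at `a†`; since `u` is strictly concave with `u 0 = 0`, `a / u a` is strictly
increasing, so the price of anarchy is compared with `κ` exactly as `a^CE` is compared with `a†`.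
-/

open Set

section ConcaveUtility

variable {u : ℝ → ℝ} {W : ℝ}

theorem continuousOn_of_deriv_ne_zero {s : Set ℝ} (hu' : ∀ x ∈ s, deriv u x ≠ 0) :
    ContinuousOn u s := fun x hx =>
  (differentiableAt_of_deriv_ne_zero (hu' x hx)).continuousAt.continuousWithinAt

theorem pos_of_deriv_pos (hu0 : u 0 = 0) (hu' : ∀ x ∈ Ico 0 W, 0 < deriv u x) {x : ℝ}
    (hx : x ∈ Ioo 0 W) : 0 < u x := by
  have hmono : StrictMonoOn u (Ico 0 W) :=
    strictMonoOn_of_deriv_pos (convex_Ico 0 W)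
      (continuousOn_of_deriv_ne_zero fun x hx => (hu' x hx).ne')
      (by simpa only [interior_Ico] using fun x hx => hu' x (Ioo_subset_Ico_self hx))
  simpa only [hu0] using hmono ⟨le_rfl, hx.1.trans hx.2⟩ (Ioo_subset_Ico_self hx) hx.1

theorem strictMonoOn_id_div (hu0 : u 0 = 0) (hu' : ∀ x ∈ Ico 0 W, 0 < deriv u x)
    (hu'' : ∀ x ∈ Ioo 0 W, deriv (deriv u) x < 0) :
    StrictMonoOn (fun a => a / u a) (Ioo 0 W) := by
  have hconc : StrictConcaveOn ℝ (Ico 0 W) u :=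
    strictConcaveOn_of_deriv2_neg (convex_Ico 0 W)
      (continuousOn_of_deriv_ne_zero fun x hx => (hu' x hx).ne')
      (fun x hx => hu'' x (by rwa [interior_Ico] at hx))
  intro a ha b hb hab
  have hslope := hconc.secant_strict_mono (a := 0) ⟨le_rfl, ha.1.trans ha.2⟩
    (Ioo_subset_Ico_self ha) (Ioo_subset_Ico_self hb) ha.1.ne' hb.1.ne' hab
  simp only [hu0, sub_zero] at hslope
  have hua := pos_of_deriv_pos hu0 hu' ha
  have hub := pos_of_deriv_pos hu0 hu' hb
  rw [div_lt_div_iff₀ hb.1 ha.1] at hslope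
  rw [div_lt_div_iff₀ hua hub]
  linarith

theorem strictMonoOn_div_deriv_sub_id (hu : ∀ x ∈ Ioo 0 W, 0 < u x)
    (hu' : ∀ x ∈ Ioo 0 W, 0 < deriv u x) (hu'' : ∀ x ∈ Ioo 0 W, deriv (deriv u) x < 0) :
    StrictMonoOn (fun a => u a / deriv u a - a) (Ioo 0 W) := by
  have hderiv : ∀ x ∈ Ioo 0 W, HasDerivAt (fun a => u a / deriv u a - a)
      ((deriv u x * deriv u x - u x * deriv (deriv u) x) / deriv u x ^ 2 - 1) x := fun x hx =>
    (((differentiableAt_of_deriv_ne_zero (hu' x hx).ne').hasDerivAt.div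
      (differentiableAt_of_deriv_ne_zero (hu'' x hx).ne).hasDerivAt (hu' x hx).ne').sub
      (hasDerivAt_id x))
  refine strictMonoOn_of_deriv_pos (convex_Ioo 0 W)
    (fun x hx => (hderiv x hx).continuousAt.continuousWithinAt) fun x hx => ?_
  rw [interior_Ioo] at hx
  have h1 := hu x hx
  have h2 := hu' x hx
  have h3 := hu'' x hx
  rw [(hderiv x hx).deriv, sub_pos, one_lt_div (by positivity)]
  nlinarith

end ConcaveUtility

theorem strictAntiOn_div_sub_div {c β δ : ℝ} (hc : 0 < c) (hβ : 0 < β) (hδ : 0 < δ) :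
    StrictAntiOn (fun a => c / (β - δ / a)) (Ioi (δ / β)) := by
  intro a ha b hb hab
  have ha0 : 0 < a := (div_pos hδ hβ).trans ha
  have hden : 0 < β - δ / a := by
    rw [sub_pos, div_lt_iff₀ ha0]
    rwa [mem_Ioi, div_lt_iff₀ hβ, mul_comm] at ha
  exact div_lt_div_of_pos_left hc hden (by gcongr)

/-- `a† = (δ + √(δ² + ρδ)) / β` is the positive root of `β²a² - 2βδa - ρδ = 0`, which is this
identity with the denominators cleared. -/
theorem div_sub_div_sqrt_eq {β δ ρ : ℝ} (hβ : 0 < β) (hδ : 0 < δ) (hρ : 0 ≤ ρ) :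
    (ρ + δ) / (β - δ / ((δ + √(δ ^ 2 + ρ * δ)) / β)) =
      (δ + √(δ ^ 2 + ρ * δ)) / β + ρ / β := by
  have hs : 0 < √(δ ^ 2 + ρ * δ) := Real.sqrt_pos.2 (by positivity)
  have hsq : √(δ ^ 2 + ρ * δ) ^ 2 = δ ^ 2 + ρ * δ := Real.sq_sqrt (by positivity)
  generalize √(δ ^ 2 + ρ * δ) = s at hs hsq ⊢
  field_simp
  rw [add_sub_cancel_left, div_eq_iff hs.ne']
  linear_combination -hsq

noncomputable def equilibriumGap (u : ℝ → ℝ) (β δ ρ a : ℝ) : ℝ :=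
  u a / deriv u a - a - (ρ + δ) / (β - δ / a)

theorem strictMonoOn_equilibriumGap {u : ℝ → ℝ} {β δ ρ W : ℝ} (hβ : 0 < β) (hδ : 0 < δ)
    (hρ : 0 ≤ ρ) (hu0 : u 0 = 0) (hu' : ∀ x ∈ Ico 0 W, 0 < deriv u x)
    (hu'' : ∀ x ∈ Ioo 0 W, deriv (deriv u) x < 0) :
    StrictMonoOn (equilibriumGap u β δ ρ) (Ioo (δ / β) W) := by
  have hsub : Ioo (δ / β) W ⊆ Ioo 0 W := Ioo_subset_Ioo_left (div_pos hδ hβ).le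
  intro a ha b hb hab
  have hφ := strictMonoOn_div_deriv_sub_id (fun x hx => pos_of_deriv_pos hu0 hu' hx)
    (fun x hx => hu' x (Ioo_subset_Ico_self hx)) hu'' (hsub ha) (hsub hb) hab
  have hψ := strictAntiOn_div_sub_div (c := ρ + δ) (by positivity) hβ hδ ha.1 hb.1 hab
  dsimp only at hφ hψ
  unfold equilibriumGap
  linarith

theorem price_of_anarchy_bounds_general
    (β δ ρ W : ℝ) (hβ : 0 < β) (hδ : 0 < δ) (hρ : 0 < ρ)
    (hW : (δ + Real.sqrt (δ ^ 2 + ρ * δ)) / β < W)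
    (u : ℝ → ℝ) (hu0 : u 0 = 0)
    (hu' : ∀ x : ℝ, 0 ≤ x → x < W → 0 < deriv u x)
    (hu'' : ∀ x : ℝ, 0 ≤ x → x ≤ W → deriv (deriv u) x < 0)
    (aCE : ℝ) (haCE : aCE ∈ Set.Ioo (δ / β) W)
    (heqCE : u aCE / deriv u aCE - aCE = (ρ + δ) / (β - δ / aCE)) :
    (deriv u ((δ + Real.sqrt (δ ^ 2 + ρ * δ)) / β) <
        u ((δ + Real.sqrt (δ ^ 2 + ρ * δ)) / β) /
          (2 * ((δ + Real.sqrt (δ ^ 2 + ρ * δ)) / β) + ρ / β) →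
      aCE < (δ + Real.sqrt (δ ^ 2 + ρ * δ)) / β ∧
      u (δ / β) / ((δ / (β * aCE)) * u aCE) <
        ((δ + Real.sqrt (δ ^ 2 + ρ * δ)) / β * u (δ / β)) /
          (δ / β * u ((δ + Real.sqrt (δ ^ 2 + ρ * δ)) / β))) ∧
    (u ((δ + Real.sqrt (δ ^ 2 + ρ * δ)) / β) /
          (2 * ((δ + Real.sqrt (δ ^ 2 + ρ * δ)) / β) + ρ / β) <
        deriv u ((δ + Real.sqrt (δ ^ 2 + ρ * δ)) / β) →
      (δ + Real.sqrt (δ ^ 2 + ρ * δ)) / β < aCE ∧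
      ((δ + Real.sqrt (δ ^ 2 + ρ * δ)) / β * u (δ / β)) /
          (δ / β * u ((δ + Real.sqrt (δ ^ 2 + ρ * δ)) / β)) <
        u (δ / β) / ((δ / (β * aCE)) * u aCE)) ∧
    (deriv u ((δ + Real.sqrt (δ ^ 2 + ρ * δ)) / β) =
        u ((δ + Real.sqrt (δ ^ 2 + ρ * δ)) / β) /
          (2 * ((δ + Real.sqrt (δ ^ 2 + ρ * δ)) / β) + ρ / β) →
      aCE = (δ + Real.sqrt (δ ^ 2 + ρ * δ)) / β ∧
      u (δ / β) / ((δ / (β * aCE)) * u aCE) =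
        ((δ + Real.sqrt (δ ^ 2 + ρ * δ)) / β * u (δ / β)) /
          (δ / β * u ((δ + Real.sqrt (δ ^ 2 + ρ * δ)) / β))) := by
  have hu'Ico : ∀ x ∈ Ico 0 W, 0 < deriv u x := fun x hx => hu' x hx.1 hx.2
  have hu''Ioo : ∀ x ∈ Ioo 0 W, deriv (deriv u) x < 0 := fun x hx => hu'' x hx.1.le hx.2.le
  have hdagger := div_sub_div_sqrt_eq hβ hδ hρ.le
  set T := (δ + √(δ ^ 2 + ρ * δ)) / β
  have hac : 0 < δ / β := div_pos hδ hβ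
  have hT_mem : T ∈ Ioo (δ / β) W :=
    ⟨div_lt_div_of_pos_right (lt_add_of_pos_right δ (Real.sqrt_pos.2 (by positivity))) hβ, hW⟩
  have hu'T : 0 < deriv u T := hu' T (hac.trans hT_mem.1).le hW
  have hk : 0 < 2 * T + ρ / β := by positivity
  have hgapCE : equilibriumGap u β δ ρ aCE = 0 := sub_eq_zero.2 heqCE
  have hgapT : equilibriumGap u β δ ρ T = u T / deriv u T - (2 * T + ρ / β) := by
    rw [equilibriumGap, hdagger]; ring
  have hgap := strictMonoOn_equilibriumGap hβ hδ hρ.le hu0 hu'Ico hu''Ioo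
  have hratio := strictMonoOn_id_div hu0 hu'Ico hu''Ioo
  have hsub : Ioo (δ / β) W ⊆ Ioo 0 W := Ioo_subset_Ioo_left hac.le
  have hpoa : u (δ / β) / (δ / (β * aCE) * u aCE) = aCE / u aCE * (u (δ / β) / (δ / β)) := by
    simp only [div_eq_mul_inv, mul_inv, inv_inv]; ring
  have hκ : T * u (δ / β) / (δ / β * u T) = T / u T * (u (δ / β) / (δ / β)) := by ring
  have hE : 0 < u (δ / β) / (δ / β) :=
    div_pos (pos_of_deriv_pos hu0 hu'Ico ⟨hac, hT_mem.1.trans hW⟩) hac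
  rw [hpoa, hκ]
  refine ⟨fun h => ?_, fun h => ?_, fun h => ?_⟩
  · have hlt : aCE < T := (hgap.lt_iff_lt haCE hT_mem).1 <| by
      rw [hgapCE, hgapT, sub_pos]; exact (lt_div_comm₀ hu'T hk).1 h
    exact ⟨hlt, mul_lt_mul_of_pos_right (hratio (hsub haCE) (hsub hT_mem) hlt) hE⟩
  · have hlt : T < aCE := (hgap.lt_iff_lt hT_mem haCE).1 <| by
      rw [hgapCE, hgapT, sub_neg]; exact (div_lt_comm₀ hk hu'T).1 h
    exact ⟨hlt, mul_lt_mul_of_pos_right (hratio (hsub hT_mem) (hsub haCE) hlt) hE⟩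
  · have heq : aCE = T := hgap.injOn haCE hT_mem <| by
      rw [hgapCE, hgapT, eq_comm, sub_eq_zero, div_eq_iff hu'T.ne',
        ← (eq_div_iff hk.ne').1 h, mul_comm]
    exact ⟨heq, by rw [heq]⟩

/-- **Price of anarchy bounds.**
With `a_c = δ/β`, `a† = (δ + √(δ² + ρδ))/β`, `a^CE` the unique conjectural
equilibrium in `(a_c, W)`, `E^CE = (δ/(β·a^CE))·u(a^CE)`, `E^OPT = u(a_c)`,
`PoA = E^OPT/E^CE` and `κ = a†·u(a_c)/(a_c·u(a†))`:
(i) if `u'(a†) < u(a†)/(2a† + ρ/β)` then `a^CE < a†` and `PoA < κ`;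
(ii) if `u'(a†) > u(a†)/(2a† + ρ/β)` then `a^CE > a†` and `PoA > κ`;
(iii) if `u'(a†) = u(a†)/(2a† + ρ/β)` then `a^CE = a†` and `PoA = κ`. -/
theorem price_of_anarchy_bounds
    (β δ ρ W : ℝ) (hβ : 0 < β) (hδ : 0 < δ) (hρ : 0 < ρ)
    (hW : (δ + Real.sqrt (δ ^ 2 + ρ * δ)) / β < W)
    (u : ℝ → ℝ) (hu : ContDiff ℝ 2 u) (hu0 : u 0 = 0)
    (hu' : ∀ x : ℝ, 0 ≤ x → x < W → 0 < deriv u x) (huW : deriv u W = 0)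
    (hu'' : ∀ x : ℝ, 0 ≤ x → x ≤ W → deriv (deriv u) x < 0)
    (aCE : ℝ) (haCE : aCE ∈ Set.Ioo (δ / β) W)
    (heqCE : u aCE / deriv u aCE - aCE = (ρ + δ) / (β - δ / aCE))
    (huniq : ∀ a ∈ Set.Ioo (δ / β) W,
      u a / deriv u a - a = (ρ + δ) / (β - δ / a) → a = aCE) :
    (deriv u ((δ + Real.sqrt (δ ^ 2 + ρ * δ)) / β) <
        u ((δ + Real.sqrt (δ ^ 2 + ρ * δ)) / β) /
          (2 * ((δ + Real.sqrt (δ ^ 2 + ρ * δ)) / β) + ρ / β) →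
      aCE < (δ + Real.sqrt (δ ^ 2 + ρ * δ)) / β ∧
      u (δ / β) / ((δ / (β * aCE)) * u aCE) <
        ((δ + Real.sqrt (δ ^ 2 + ρ * δ)) / β * u (δ / β)) /
          (δ / β * u ((δ + Real.sqrt (δ ^ 2 + ρ * δ)) / β))) ∧
    (u ((δ + Real.sqrt (δ ^ 2 + ρ * δ)) / β) /
          (2 * ((δ + Real.sqrt (δ ^ 2 + ρ * δ)) / β) + ρ / β) <
        deriv u ((δ + Real.sqrt (δ ^ 2 + ρ * δ)) / β) →
      (δ + Real.sqrt (δ ^ 2 + ρ * δ)) / β < aCE ∧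
      ((δ + Real.sqrt (δ ^ 2 + ρ * δ)) / β * u (δ / β)) /
          (δ / β * u ((δ + Real.sqrt (δ ^ 2 + ρ * δ)) / β)) <
        u (δ / β) / ((δ / (β * aCE)) * u aCE)) ∧
    (deriv u ((δ + Real.sqrt (δ ^ 2 + ρ * δ)) / β) =
        u ((δ + Real.sqrt (δ ^ 2 + ρ * δ)) / β) /
          (2 * ((δ + Real.sqrt (δ ^ 2 + ρ * δ)) / β) + ρ / β) →
      aCE = (δ + Real.sqrt (δ ^ 2 + ρ * δ)) / β ∧
      u (δ / β) / ((δ / (β * aCE)) * u aCE) =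
        ((δ + Real.sqrt (δ ^ 2 + ρ * δ)) / β * u (δ / β)) /
          (δ / β * u ((δ + Real.sqrt (δ ^ 2 + ρ * δ)) / β))) :=
  price_of_anarchy_bounds_general β δ ρ W hβ hδ hρ hW u hu0 hu' hu'' aCE haCE heqCE
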